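/- arXiv:2310.14725 — 2 statements merged into one kernel-verified Lean document; each statement's English description precedes it below -/
import Mathlib

section
/- Let A = (α, μ, β) be a P-finite automaton of dimension n over Σ and let W ⊆ Σ* be a finite set of words with ε ∈ W. Suppose that for every σ ∈ Σ and u ∈ W, B_A(σu) lies in the ℚ[x]-submodule span_{ℚ[x]}{B_A(u') : u' ∈ W}. Then for every word w ∈ Σ*, B_A(w) ∈ span_{ℚ[x]}{B_A(u) : u ∈ W}; in particular, span_{ℚ[x]}{B_A(u) : u ∈ W} equals the backward module of A. -/
open Polynomial Matrix

/-- Substitute `x + k` for `x` in a polynomial. -/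
noncomputable def shiftP (k : ℕ) (p : Polynomial ℚ) : Polynomial ℚ :=
  p.comp (Polynomial.X + Polynomial.C (k : ℚ))

/-- The extension of the transition map `μ` of a P-finite automaton to words:
`μ(σ₁⋯σₖ)(x) = μ(σ₁)(x)·μ(σ₂)(x+1)⋯μ(σₖ)(x+k-1)`, so that
`μ(ε)(x) = I` and `μ(wσ)(x) = μ(w)(x)·μ(σ)(x+|w|)`. -/
noncomputable def muWord {S ι : Type*} [Fintype ι] [DecidableEq ι]
    (μ : S → Matrix ι ι (Polynomial ℚ)) (w : List S) : Matrix ι ι (Polynomial ℚ) :=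
  (w.zipIdx.map (fun p => (μ p.1).map (shiftP p.2))).prod

/-- The function computed by the P-finite automaton `(α, μ, β)`:
`f_A(w) = α·μ(w,1)·β(|w|+1)`. -/
noncomputable def fAut {S ι : Type*} [Fintype ι] [DecidableEq ι]
    (α : ι → ℚ) (μ : S → Matrix ι ι (Polynomial ℚ)) (β : ι → Polynomial ℚ)
    (w : List S) : ℚ :=
  α ⬝ᵥ ((muWord μ w).map (Polynomial.eval (1 : ℚ))).mulVec
      (fun i => (β i).eval ((w.length : ℚ) + 1))

/-- The backward function of a P-finite automaton: `B_A(u)(x) = μ(u)(x)·β(x+|u|)`. -/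
noncomputable def backF {S ι : Type*} [Fintype ι] [DecidableEq ι]
    (μ : S → Matrix ι ι (Polynomial ℚ)) (β : ι → Polynomial ℚ)
    (w : List S) : ι → Polynomial ℚ :=
  (muWord μ w).mulVec (fun i => shiftP w.length (β i))

/- Writing `τ` for the ring automorphism `p(x) ↦ p(x+1)` of `ℚ[x]`, the backward vectors satisfy
`B_A(σw) = μ(σ) · τ(B_A(w))`. The map `v ↦ μ(σ) · τ(v)` is `τ`-semilinear, so its preimage of the
`ℚ[x]`-span `M` of `{B_A(u) : u ∈ W}` is again a `ℚ[x]`-submodule; by hypothesis it contains the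
generators of `M`, hence all of `M`. Induction on `w` then puts every `B_A(w)` in `M`. -/

section Backward

variable {S ι : Type*} [Fintype ι] [DecidableEq ι]

noncomputable def shiftRingHom (k : ℕ) : ℚ[X] →+* ℚ[X] :=
  compRingHom (X + C (k : ℚ))

@[simp]
lemma coe_shiftRingHom (k : ℕ) : ⇑(shiftRingHom k) = shiftP k :=
  rfl

@[simp]
lemma shiftP_zero : shiftP 0 = id := by
  ext1 p
  simp [shiftP]

lemma shiftP_add (j k : ℕ) (p : ℚ[X]) : shiftP (j + k) p = shiftP k (shiftP j p) := by
  simp only [shiftP, comp_assoc, add_comp, X_comp, C_comp, Nat.cast_add, C_add]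
  ring_nf

lemma mapMatrix_shiftRingHom_prod_zipIdx (μ : S → Matrix ι ι ℚ[X]) (w : List S) (k : ℕ) :
    (shiftRingHom 1).mapMatrix ((w.zipIdx k).map fun p => (μ p.1).map (shiftP p.2)).prod =
      ((w.zipIdx (k + 1)).map fun p => (μ p.1).map (shiftP p.2)).prod := by
  rw [map_list_prod, List.zipIdx_succ, List.map_map, List.map_map]
  congr 1
  refine List.map_congr_left fun p _ => ?_
  ext i j
  simp [shiftP_add]

lemma muWord_cons (μ : S → Matrix ι ι ℚ[X]) (σ : S) (w : List S) :
    muWord μ (σ :: w) = μ σ * (muWord μ w).map (shiftP 1) := by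
  rw [muWord, List.zipIdx_cons, List.map_cons, List.prod_cons, muWord,
    ← mapMatrix_shiftRingHom_prod_zipIdx]
  simp

lemma backF_cons (μ : S → Matrix ι ι ℚ[X]) (β : ι → ℚ[X]) (σ : S) (w : List S) :
    backF μ β (σ :: w) = μ σ *ᵥ (shiftP 1 ∘ backF μ β w) := by
  have hshift := funext fun j => RingHom.map_mulVec (shiftRingHom 1) (muWord μ w)
    (fun i => shiftP w.length (β i)) j
  simp only [coe_shiftRingHom, Function.comp_def] at hshift
  simp only [backF, muWord_cons, ← mulVec_mulVec, List.length_cons, shiftP_add, Function.comp_def]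
  rw [hshift]

noncomputable def shiftMulVec (M : Matrix ι ι ℚ[X]) : (ι → ℚ[X]) →ₛₗ[shiftRingHom 1] (ι → ℚ[X]) where
  toFun v := M *ᵥ (shiftP 1 ∘ v)
  map_add' v w := by
    rw [← mulVec_add]
    congr 1
    ext i
    simp [shiftP]
  map_smul' p v := by
    rw [← mulVec_smul]
    congr 1
    ext i
    simp [shiftP]

theorem backF_mem_span_of_closed (μ : S → Matrix ι ι ℚ[X]) (β : ι → ℚ[X])
    (W : Set (List S)) (hW : [] ∈ W)
    (hclosed : ∀ σ, ∀ u ∈ W, backF μ β (σ :: u) ∈ Submodule.span ℚ[X] (backF μ β '' W))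
    (w : List S) : backF μ β w ∈ Submodule.span ℚ[X] (backF μ β '' W) := by
  induction w with
  | nil => exact Submodule.subset_span ⟨[], hW, rfl⟩
  | cons σ w ih =>
    have hstable : Submodule.span ℚ[X] (backF μ β '' W) ≤
        (Submodule.span ℚ[X] (backF μ β '' W)).comap (shiftMulVec (μ σ)) := by
      rw [Submodule.span_le]
      rintro _ ⟨u, hu, rfl⟩
      simpa [shiftMulVec, backF_cons] using hclosed σ u hu
    simpa [shiftMulVec, backF_cons] using hstable ih

end Backward

theorem backward_vectors_in_polynomial_span_general
    {S : Type*} (n : ℕ)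
    (μ : S → Matrix (Fin n) (Fin n) (Polynomial ℚ))
    (β : Fin n → Polynomial ℚ)
    (W : Finset (List S)) (hW : ([] : List S) ∈ W)
    (hclosed : ∀ (σ : S), ∀ u ∈ W,
      backF μ β (σ :: u) ∈
        Submodule.span (Polynomial ℚ) (backF μ β '' (W : Set (List S)))) :
    (∀ w : List S,
      backF μ β w ∈
        Submodule.span (Polynomial ℚ) (backF μ β '' (W : Set (List S)))) ∧
    Submodule.span (Polynomial ℚ) (backF μ β '' (W : Set (List S)))
      = Submodule.span (Polynomial ℚ) (Set.range (backF μ β)) := by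
  have hmem := backF_mem_span_of_closed μ β (W : Set (List S)) hW hclosed
  exact ⟨hmem, le_antisymm (Submodule.span_mono (Set.image_subset_range _ _))
    (Submodule.span_le.mpr (Set.range_subset_iff.mpr hmem))⟩

/-- Let `W` be a finite set of words containing `ε`.  If for every
letter `σ` and every `u ∈ W` the vector `B_A(σu)` lies in the `ℚ[x]`-submodule spanned
by `{B_A(u') : u' ∈ W}`, then every `B_A(w)` lies in that submodule; in particular that
submodule equals the backward module of `A`. -/
theorem backward_vectors_in_polynomial_span
    {S : Type*} [Fintype S] (n : ℕ)
    (α : Fin n → ℚ) (μ : S → Matrix (Fin n) (Fin n) (Polynomial ℚ))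
    (β : Fin n → Polynomial ℚ)
    (W : Finset (List S)) (hW : ([] : List S) ∈ W)
    (hclosed : ∀ (σ : S), ∀ u ∈ W,
      backF μ β (σ :: u) ∈
        Submodule.span (Polynomial ℚ) (backF μ β '' (W : Set (List S)))) :
    (∀ w : List S,
      backF μ β w ∈
        Submodule.span (Polynomial ℚ) (backF μ β '' (W : Set (List S)))) ∧
    Submodule.span (Polynomial ℚ) (backF μ β '' (W : Set (List S)))
      = Submodule.span (Polynomial ℚ) (Set.range (backF μ β)) :=
  backward_vectors_in_polynomial_span_general n μ β W hW hclosed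
end

section
/- Let A = (α, μ, β) be a P-finite automaton of dimension n over Σ computing f = f_A. Let R and C be sequences of words and let d, s ∈ ℕ be such that the matrix A(R,C,d) (built from f) has full row rank and |r| < s for every word r ∈ R. Then the vectors f̄^s_A(r), for r ∈ R, are linearly independent over ℚ; that is, the ℚ-vector space span_ℚ{f̄^s_A(r) : r ∈ R} ⊆ ℚ^{1×(s+1)n} has dimension |R|. -/
open Polynomial Matrix

/-- The row of the table `H(R,C)` associated to a word `w`:
`row_C(w) = (f(w c₁), …, f(w cₙ))`. -/
noncomputable def tableRow {S : Type*} (f : List S → ℚ) {n : ℕ} (C : Fin n → List S)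
    (w : List S) : Fin n → ℚ := fun j => f (w ++ C j)

/-- The matrix `A(R,C,d) = [Δ⁰H(R,C) | Δ¹H(R,C) | ⋯ | ΔᵈH(R,C)]`, an
`m × (d+1)n` matrix with columns indexed by `Fin (d+1) × Fin n`, where
`Δ = diag(|r₁|+1, …, |rₘ|+1)` and `H(R,C)ᵢⱼ = f(rᵢcⱼ)`. -/
noncomputable def tableA {S : Type*} (f : List S → ℚ) {m n : ℕ}
    (R : Fin m → List S) (C : Fin n → List S) (d : ℕ) :
    Matrix (Fin m) (Fin (d + 1) × Fin n) ℚ :=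
  fun i p => ((R i).length + 1 : ℚ) ^ (p.1 : ℕ) * f (R i ++ C p.2)

/-- The `s`-bounded forward vector of a P-finite automaton:
`f̄ˢ_A(u) = (0_{1×|u|n}, α·μ(u,1), 0_{1×(s−|u|)n}) ∈ ℚ^{1×(s+1)n}`, encoded as a
function on `Fin (s+1) × ι` whose block at position `|u|` is `α·μ(u,1)`. -/
noncomputable def fwdBounded {S ι : Type*} [Fintype ι] [DecidableEq ι]
    (α : ι → ℚ) (μ : S → Matrix ι ι (Polynomial ℚ)) (s : ℕ) (u : List S) :
    Fin (s + 1) × ι → ℚ :=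
  fun p =>
    if (p.1 : ℕ) = u.length then
      Matrix.vecMul α ((muWord μ u).map (Polynomial.eval (1 : ℚ))) p.2
    else 0

/-!
Since `μ(rc)(x) = μ(r)(x)·μ(c)(x+|r|)`, every value of the automaton splits as
`f(rc) = α·μ(r,1) · B(c)(|r|+1)`, where `B(c)(x) = μ(c)(x)·β(x+|c|)` is the backward vector of `c`.
So the row of `A(R,C,d)` belonging to `r` is the image of `f̄ˢ(r)` under one linear map, the same
for all `r`, whose block at position `k` sends `v` to `((k+1)ᵉ · v·B(c)(k+1))_{e,c}`. These rows
are independent because `A(R,C,d)` has full row rank, and a family with an independent image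
under a linear map is itself independent.
-/

lemma Matrix.linearIndependent_row_iff_rank_eq_card {m n R : Type*} [Field R] [Fintype m]
    [Fintype n] {A : Matrix m n R} : LinearIndependent R A.row ↔ A.rank = Fintype.card m := by
  rw [linearIndependent_iff_card_eq_finrank_span, Set.finrank, ← rank_eq_finrank_span_row,
    eq_comm]

lemma Matrix.ite_fst_vecMul {κ ι ν R : Type*} [Fintype κ] [Fintype ι] [DecidableEq κ]
    [NonUnitalNonAssocSemiring R] (k : κ) (x : ι → R) (W : Matrix (κ × ι) ν R) :
    (fun q : κ × ι => if q.1 = k then x q.2 else 0) ᵥ* W = x ᵥ* W.submatrix (Prod.mk k) id := by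
  ext p
  simp [vecMul, dotProduct, Fintype.sum_prod_type, ite_mul]

lemma shiftP_eq_compRingHom (k : ℕ) : shiftP k = compRingHom (X + C (k : ℚ)) := rfl

lemma shiftP_shiftP (a b : ℕ) (p : ℚ[X]) : shiftP a (shiftP b p) = shiftP (a + b) p := by
  simp only [shiftP, comp_assoc, add_comp, X_comp, C_comp, Nat.cast_add, C_add]
  ring_nf

lemma eval_shiftP (k : ℕ) (x : ℚ) (p : ℚ[X]) : (shiftP k p).eval x = p.eval (x + k) := by
  simp [shiftP, eval_comp]

section MuWord

variable {S ι : Type*} [Fintype ι] [DecidableEq ι] (μ : S → Matrix ι ι ℚ[X])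

lemma prod_zipIdx_map_shiftP (w : List S) (n : ℕ) :
    ((w.zipIdx n).map fun p => (μ p.1).map (shiftP p.2)).prod = (muWord μ w).map (shiftP n) := by
  rw [muWord, shiftP_eq_compRingHom, ← RingHom.mapMatrix_apply, map_list_prod,
    List.zipIdx_eq_map_add, List.map_map, List.map_map]
  congr 1
  refine List.map_congr_left fun p _ => ?_
  exact Matrix.ext fun i j => (shiftP_shiftP n p.2 _).symm

lemma muWord_append (r c : List S) :
    muWord μ (r ++ c) = muWord μ r * (muWord μ c).map (shiftP r.length) := by
  rw [muWord, List.zipIdx_append, List.map_append, List.prod_append, prod_zipIdx_map_shiftP μ c,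
    zero_add]
  rfl

end MuWord

section Automaton

variable {S ι : Type*} [Fintype ι] [DecidableEq ι]
  (α : ι → ℚ) (μ : S → Matrix ι ι ℚ[X]) (β : ι → ℚ[X])

lemma map_eval_muWord_append (t : ℚ) (r c : List S) :
    (muWord μ (r ++ c)).map (eval t) =
      (muWord μ r).map (eval t) * (muWord μ c).map (eval (t + r.length)) := by
  rw [muWord_append, ← coe_evalRingHom, ← RingHom.mapMatrix_apply, map_mul]
  congr 1
  exact Matrix.ext fun i j => eval_shiftP _ _ _

lemma eval_backF (t : ℚ) (c : List S) :
    (fun j => (backF μ β c j).eval t) =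
      (muWord μ c).map (eval t) *ᵥ fun i => (β i).eval (t + c.length) := by
  funext j
  simp [backF, Matrix.mulVec, dotProduct, eval_finsetSum, eval_shiftP]

lemma fAut_append (r c : List S) :
    fAut α μ β (r ++ c) =
      α ᵥ* (muWord μ r).map (eval 1) ⬝ᵥ fun j => (backF μ β c j).eval (r.length + 1) := by
  rw [eval_backF, ← dotProduct_mulVec, fAut, map_eval_muWord_append, ← mulVec_mulVec,
    List.length_append, Nat.cast_add, add_comm (1 : ℚ), add_right_comm]

end Automaton

section Table

variable {S ι : Type*} [Fintype ι] [DecidableEq ι]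
  (α : ι → ℚ) (μ : S → Matrix ι ι ℚ[X]) (β : ι → ℚ[X]) {n : ℕ} (C : Fin n → List S) (s d : ℕ)

noncomputable def backTable : Matrix (Fin (s + 1) × ι) (Fin (d + 1) × Fin n) ℚ :=
  fun q p => (((q.1 : ℕ) : ℚ) + 1) ^ (p.1 : ℕ) *
    (backF μ β (C p.2) q.2).eval (((q.1 : ℕ) : ℚ) + 1)

lemma fwdBounded_vecMul_backTable {u : List S} (hu : u.length ≤ s) :
    fwdBounded α μ s u ᵥ* backTable μ β C s d =
      fun p => ((u.length : ℚ) + 1) ^ (p.1 : ℕ) * fAut α μ β (u ++ C p.2) := by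
  have hblock : fwdBounded α μ s u = fun q => if q.1 = ⟨u.length, Nat.lt_succ_of_le hu⟩
      then (α ᵥ* (muWord μ u).map (eval 1)) q.2 else 0 := by
    funext q
    simp [fwdBounded, Fin.ext_iff]
  ext p
  rw [hblock, ite_fst_vecMul, fAut_append, dotProduct, Finset.mul_sum]
  simp [vecMul, dotProduct, backTable, mul_left_comm]

end Table

theorem bounded_forward_vectors_linearly_independent_general
    {S : Type*} (nA m nc d s : ℕ)
    (α : Fin nA → ℚ) (μ : S → Matrix (Fin nA) (Fin nA) (Polynomial ℚ))
    (β : Fin nA → Polynomial ℚ)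
    (R : Fin m → List S) (C : Fin nc → List S)
    (hrank : (tableA (fAut α μ β) R C d).rank = m)
    (hlen : ∀ i : Fin m, (R i).length < s) :
    LinearIndependent ℚ (fun i : Fin m => fwdBounded α μ s (R i)) ∧
    Module.finrank ℚ
        (Submodule.span ℚ (Set.range (fun i : Fin m => fwdBounded α μ s (R i))))
      = m := by
  have hrows : LinearIndependent ℚ (tableA (fAut α μ β) R C d).row :=
    linearIndependent_row_iff_rank_eq_card.mpr (by rw [hrank, Fintype.card_fin])
  have hfwd : LinearIndependent ℚ fun i => fwdBounded α μ s (R i) := by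
    refine LinearIndependent.of_comp (backTable μ β C s d).vecMulLinear ?_
    convert hrows using 1
    funext i
    exact fwdBounded_vecMul_backTable α μ β C s d (hlen i).le
  exact ⟨hfwd, by rw [finrank_span_eq_card hfwd, Fintype.card_fin]⟩

/-- If `A(R,C,d)` (built from `f = f_A`) has full row rank and every
`r ∈ R` has length `< s`, then the `s`-bounded forward vectors `f̄ˢ_A(r)`, `r ∈ R`, are
linearly independent over `ℚ`; equivalently their span has dimension `|R|`. -/
theorem bounded_forward_vectors_linearly_independent
    {S : Type*} [Fintype S] (nA m nc d s : ℕ)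
    (α : Fin nA → ℚ) (μ : S → Matrix (Fin nA) (Fin nA) (Polynomial ℚ))
    (β : Fin nA → Polynomial ℚ)
    (R : Fin m → List S) (C : Fin nc → List S)
    (hrank : (tableA (fAut α μ β) R C d).rank = m)
    (hlen : ∀ i : Fin m, (R i).length < s) :
    LinearIndependent ℚ (fun i : Fin m => fwdBounded α μ s (R i)) ∧
    Module.finrank ℚ
        (Submodule.span ℚ (Set.range (fun i : Fin m => fwdBounded α μ s (R i))))
      = m :=
  bounded_forward_vectors_linearly_independent_general nA m nc d s α μ β R C hrank hlen
end
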